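/- arXiv:2006.02184 — 4 statements merged into one kernel-verified Lean document; each statement's English description precedes it below -/
import Mathlib

section
/- Suppose the number n of teams satisfies n ≡ 1 (mod 3) and n ≥ 4. Then a simple schedule with exactly one room of size 4 and (n−4)/3 rooms of size 3 exists if and only if every problem p ∈ P is avoided by at least one team. -/
/-!
A problem shared by all four teams of the 4-room would be set to two of them in the same
round, so every problem is avoided. Conversely, a team together with one avoider of each of
its problems gives a 4-room in which every problem is avoided; then in every room each
problem lies in at most 3 portfolios. Scheduling a room means 3-edge-colouring the bipartite
team–problem incidence graph, whose maximum degree is 3, which is König's theorem: by Hall's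
theorem there is a system of distinct representatives meeting every problem of full degree,
and removing it lowers the degree bound by one. All rooms are handled at once by tagging
each problem with the room it is set in.
-/

open Finset

lemma exists_forall_ne_of_injOn_of_lt_card {ι α : Type*} {k : ℕ} {s : Finset ι}
    {π : Fin k → ι → α} (hπ : ∀ j, Set.InjOn (π j) s) (hk : k < #s) (a : α) :
    ∃ i ∈ s, ∀ j, π j i ≠ a := by
  by_contra! h
  choose g hg using fun i : s => h i i.2
  obtain ⟨x, y, hxy, hg'⟩ := Fintype.exists_ne_map_eq_of_card_lt g (by simpa using hk)
  exact hxy (Subtype.ext (hπ (g x) x.2 y.2 (by rw [hg x, hg', hg y])))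

section Family

variable {ι α : Type*} [DecidableEq α]

lemma sum_card_filter_mem_eq_sum_card (A : ι → Finset α) {s : Finset ι} {N : Finset α}
    (hN : ∀ i ∈ s, A i ⊆ N) :
    ∑ a ∈ N, #{i ∈ s | a ∈ A i} = ∑ i ∈ s, #(A i) := by
  refine (sum_card_bipartiteAbove_eq_sum_card_bipartiteBelow (fun i a => a ∈ A i)).symm.trans
    (sum_congr rfl fun i hi => ?_)
  rw [bipartiteAbove, filter_mem_eq_inter, inter_eq_right.mpr (hN i hi)]

variable [Fintype ι] {k : ℕ}

def occurrences (A : ι → Finset α) (a : α) : ℕ := #{i | a ∈ A i}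

/-- Hall's condition for the family padded with `m` copies of a set `D` of deficient elements
whose total deficiency is at least `k * m`. -/
lemma card_le_card_biUnion_sumElim (A : ι → Finset α) (hk : 0 < k)
    (hcard : ∀ i, #(A i) = k) (hocc : ∀ a, occurrences A a ≤ k)
    {D : Finset α} {m : ℕ} (hD : k * m ≤ ∑ a ∈ D, (k - occurrences A a))
    (s : Finset (ι ⊕ Fin m)) : #s ≤ #(s.biUnion (Sum.elim A fun _ => D)) := by
  set N := s.biUnion (Sum.elim A fun _ => D)
  have hsub : ∀ x ∈ s, Sum.elim A (fun _ => D) x ⊆ N := fun x hx => subset_biUnion_of_mem _ hx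
  have hcount : k * #s.toLeft + ∑ a ∈ N, (k - occurrences A a) ≤ k * #N := by
    have hdc := sum_card_filter_mem_eq_sum_card A fun i hi => hsub _ (mem_toLeft.mp hi)
    simp only [hcard, sum_const, smul_eq_mul] at hdc
    calc k * #s.toLeft + ∑ a ∈ N, (k - occurrences A a)
        = ∑ a ∈ N, (#{i ∈ s.toLeft | a ∈ A i} + (k - occurrences A a)) := by
          rw [sum_add_distrib, hdc, mul_comm]
      _ ≤ ∑ a ∈ N, k := sum_le_sum fun a _ => by
          have : #{i ∈ s.toLeft | a ∈ A i} ≤ occurrences A a :=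
            card_le_card (filter_subset_filter _ (subset_univ _))
          have := hocc a
          omega
      _ = k * #N := by rw [sum_const, smul_eq_mul, mul_comm]
  refine Nat.le_of_mul_le_mul_left ?_ hk
  rw [← card_toLeft_add_card_toRight (u := s)]
  rcases s.toRight.eq_empty_or_nonempty with hR | ⟨j, hj⟩
  · rw [hR, card_empty, add_zero]
    omega
  · have hDN : ∑ a ∈ D, (k - occurrences A a) ≤ ∑ a ∈ N, (k - occurrences A a) :=
      sum_le_sum_of_subset (hsub _ (mem_toRight.mp hj))
    have hm : #s.toRight ≤ m := (card_le_univ _).trans_eq (Fintype.card_fin m)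
    nlinarith

lemma exists_transversal_covering_saturated (A : ι → Finset α) (hk : 0 < k)
    (hcard : ∀ i, #(A i) = k) (hocc : ∀ a, occurrences A a ≤ k) :
    ∃ f : ι → α, Function.Injective f ∧ (∀ i, f i ∈ A i) ∧
      ∀ a, occurrences A a = k → a ∈ Set.range f := by
  set U := univ.biUnion A
  have hAU : ∀ i, A i ⊆ U := fun i => subset_biUnion_of_mem A (mem_univ i)
  have hsum : ∑ a ∈ U, occurrences A a = k * Fintype.card ι := by
    have := sum_card_filter_mem_eq_sum_card A fun i (_ : i ∈ univ) => hAU i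
    rwa [sum_congr rfl fun i _ => hcard i, sum_const, smul_eq_mul, card_univ, mul_comm] at this
  have hιU : Fintype.card ι ≤ #U := by
    have : ∑ a ∈ U, occurrences A a ≤ ∑ a ∈ U, k := sum_le_sum fun a _ => hocc a
    rw [hsum, sum_const, smul_eq_mul, mul_comm #U] at this
    exact Nat.le_of_mul_le_mul_left this hk
  -- Padded with `m` copies of the deficient set `D`, a transversal is onto `U`; the padding
  -- only hits elements of `D`, so every saturated element is hit by a genuine member.
  set m := #U - Fintype.card ι
  set D := {a ∈ U | occurrences A a < k}
  have hD : ∑ a ∈ D, (k - occurrences A a) = k * m := by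
    rw [sum_filter_of_ne fun a _ h => by omega, sum_tsub_distrib _ fun a _ => hocc a, hsum,
      sum_const, smul_eq_mul, mul_comm, Nat.mul_sub]
  obtain ⟨F, hFinj, hFmem⟩ := (all_card_le_biUnion_card_iff_exists_injective _).mp
    (card_le_card_biUnion_sumElim A hk hcard hocc hD.ge)
  have hFU : ∀ x, F x ∈ U := fun x => by
    cases x with
    | inl i => exact hAU i (hFmem _)
    | inr j => exact filter_subset _ _ (hFmem _)
  have himage : univ.image F = U := by
    refine eq_of_subset_of_card_le (fun a ha => ?_) ?_
    · obtain ⟨x, -, rfl⟩ := mem_image.mp ha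
      exact hFU x
    · rw [card_image_of_injective _ hFinj, card_univ, Fintype.card_sum, Fintype.card_fin]
      omega
  refine ⟨F ∘ Sum.inl, hFinj.comp Sum.inl_injective, fun i => hFmem (.inl i), fun a ha => ?_⟩
  obtain ⟨i, hi⟩ : ∃ i, a ∈ A i := by
    by_contra! h
    simp [occurrences, h] at ha
    omega
  obtain ⟨x, -, rfl⟩ := mem_image.mp (himage ▸ hAU i hi)
  cases x with
  | inl i => exact ⟨i, rfl⟩
  | inr j => exact absurd ha (mem_filter.mp (hFmem (.inr j))).2.ne

lemma occurrences_erase_transversal_le {A : ι → Finset α} {f : ι → α}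
    (hfA : ∀ i, f i ∈ A i) (hocc : ∀ a, occurrences A a ≤ k + 1)
    (hcover : ∀ a, occurrences A a = k + 1 → a ∈ Set.range f) (a : α) :
    occurrences (fun i => (A i).erase (f i)) a ≤ k := by
  classical
  by_cases ha : occurrences A a = k + 1
  · obtain ⟨i₀, rfl⟩ := hcover a ha
    have hsub : ({i | f i₀ ∈ (A i).erase (f i)} : Finset ι) ⊆
        ({i | f i₀ ∈ A i} : Finset ι).erase i₀ := by
      intro i hi
      simp only [mem_filter, mem_univ, true_and, mem_erase] at hi ⊢
      exact ⟨fun h => hi.1 (by rw [h]), hi.2⟩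
    have := card_le_card hsub
    rw [card_erase_of_mem (by simpa using hfA i₀)] at this
    simp only [occurrences] at ha ⊢
    omega
  · have hsub : ({i | a ∈ (A i).erase (f i)} : Finset ι) ⊆ ({i | a ∈ A i} : Finset ι) :=
      monotone_filter_right _ fun _ _ => mem_of_mem_erase
    have := card_le_card hsub
    have := hocc a
    simp only [occurrences] at ha this ⊢
    omega

theorem exists_transversal_decomposition (A : ι → Finset α)
    (hcard : ∀ i, #(A i) = k) (hocc : ∀ a, occurrences A a ≤ k) :
    ∃ π : Fin k → ι → α, (∀ j, Function.Injective (π j)) ∧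
      ∀ i, univ.image (fun j => π j i) = A i := by
  induction k generalizing A with
  | zero =>
    exact ⟨Fin.elim0, fun j => j.elim0,
      fun i => by simpa using (card_eq_zero.mp (hcard i)).symm⟩
  | succ k ih =>
    obtain ⟨f, hf, hfA, hcover⟩ := exists_transversal_covering_saturated A k.succ_pos hcard hocc
    obtain ⟨π, hπ, hπA⟩ := ih (fun i => (A i).erase (f i))
      (fun i => by rw [card_erase_of_mem (hfA i), hcard, Nat.add_sub_cancel])
      (occurrences_erase_transversal_le hfA hocc hcover)
    refine ⟨Fin.cons f π, Fin.cases hf hπ, fun i => ?_⟩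
    rw [← insert_erase (hfA i), ← hπA i]
    ext a
    simp [Fin.exists_fin_succ, eq_comm]

theorem exists_transversal_decomposition_injOn_fibers {β : Type*} [DecidableEq β]
    (room : ι → β) (A : ι → Finset α) (hcard : ∀ i, #(A i) = k)
    (hocc : ∀ r a, #{i | room i = r ∧ a ∈ A i} ≤ k) :
    ∃ π : Fin k → ι → α, (∀ j i i', room i = room i' → π j i = π j i' → i = i') ∧
      ∀ i, univ.image (fun j => π j i) = A i := by
  obtain ⟨σ, hσ, hσA⟩ := exists_transversal_decomposition (fun i => (A i).image (room i, ·))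
    (fun i => by rw [card_image_of_injective _ (Prod.mk_right_injective _), hcard])
    (fun ⟨r, a⟩ => by simpa [occurrences, and_comm, eq_comm] using hocc r a)
  have hσroom : ∀ j i, (σ j i).1 = room i := fun j i => by
    obtain ⟨a, -, ha⟩ := mem_image.mp (hσA i ▸ mem_image_of_mem (σ · i) (mem_univ j))
    rw [← ha]
  refine ⟨fun j i => (σ j i).2,
    fun j i i' hr h => hσ j (Prod.ext (by rw [hσroom, hσroom, hr]) h), fun i => ?_⟩
  calc univ.image (fun j => (σ j i).2) = (univ.image (σ · i)).image Prod.snd := image_image.symm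
    _ = A i := by rw [hσA i, image_image]; exact image_id

end Family

lemma exists_fiber_zero_eq_and_card_fiber_eq {T : Type*} [Fintype T] (Q : Finset T) {m k : ℕ}
    (hT : Fintype.card T = #Q + m * k) :
    ∃ room : T → Fin (m + 1),
      ({t | room t = 0} : Finset T) = Q ∧ ∀ r, r ≠ 0 → #{t | room t = r} = k := by
  classical
  let e : {t // t ∉ Q} ≃ Fin m × Fin k := Fintype.equivOfCardEq <| by
    rw [Fintype.card_subtype_compl, Fintype.card_coe, hT]
    simp
  let room : T → Fin (m + 1) := fun t => if h : t ∈ Q then 0 else (e ⟨t, h⟩).1.succ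
  refine ⟨room, ?_, fun r hr => ?_⟩
  · ext t
    by_cases h : t ∈ Q <;> simp [room, h, Fin.succ_ne_zero]
  obtain ⟨r, rfl⟩ := Fin.exists_succ_eq.mpr hr
  have hfiber : ({t | room t = r.succ} : Finset T) =
      ({r} ×ˢ univ).map
        ⟨fun y => (e.symm y).1, Subtype.val_injective.comp e.symm.injective⟩ := by
    ext t
    by_cases h : t ∈ Q
    · simp [room, h]
      exact iff_of_false (Fin.succ_ne_zero r).symm fun ⟨a, ha⟩ => (e.symm (r, a)).2 (ha ▸ h)
    · simp [room, h]
      constructor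
      · intro hr'
        exact ⟨(e ⟨t, h⟩).2, by rw [← hr', Prod.mk.eta, e.symm_apply_apply]⟩
      · rintro ⟨a, rfl⟩
        simp
  rw [hfiber, card_map, card_product, card_singleton, card_univ, Fintype.card_fin, one_mul]

lemma exists_card_eq_forall_exists_notMem {T P : Type*} [Fintype T] (Pf : T → Finset P)
    {k : ℕ} (hPf : ∀ t, #(Pf t) ≤ k) (havoid : ∀ p, ∃ t, p ∉ Pf t)
    (hT : k + 1 ≤ Fintype.card T) :
    ∃ Q : Finset T, #Q = k + 1 ∧ ∀ p, ∃ t ∈ Q, p ∉ Pf t := by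
  classical
  obtain ⟨t₀⟩ : Nonempty T := Fintype.card_pos_iff.mp (by omega)
  choose u hu using havoid
  have hcard : #(insert t₀ ((Pf t₀).image u)) ≤ k + 1 :=
    (card_insert_le _ _).trans (Nat.add_le_add_right (card_image_le.trans (hPf t₀)) 1)
  obtain ⟨Q, hQ, hQcard⟩ := exists_superset_card_eq hcard hT
  refine ⟨Q, hQcard, fun p => ?_⟩
  by_cases hp : p ∈ Pf t₀
  · exact ⟨u p, hQ (mem_insert_of_mem (mem_image_of_mem u hp)), hu p⟩
  · exact ⟨t₀, hQ (mem_insert_self _ _), hp⟩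

theorem simple_schedule_iff_avoided_of_mod_three_eq_one_general
    {T P : Type*} [Fintype T] [DecidableEq P]
    (Pf : T → Finset P) (hPf : ∀ t, (Pf t).card = 3)
    (hmod : Fintype.card T % 3 = 1) (hn : 4 ≤ Fintype.card T) :
    (∃ (room : T → Fin ((Fintype.card T - 4) / 3 + 1)) (π : Fin 3 → T → P),
      ((Finset.univ.filter (fun t => room t = 0)).card = 4) ∧
      (∀ r, r ≠ 0 → (Finset.univ.filter (fun t => room t = r)).card = 3) ∧
      (∀ t, ({π 0 t, π 1 t, π 2 t} : Finset P) = Pf t) ∧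
      (∀ (j : Fin 3) (t t' : T), t ≠ t' → room t = room t' → π j t ≠ π j t'))
    ↔ (∀ p : P, ∃ t : T, p ∉ Pf t) := by
  constructor
  · rintro ⟨room, π, h4, -, hπ, hinj⟩ p
    have hπ0 : ∀ j, Set.InjOn (π j) ({t | room t = 0} : Finset T) := fun j t ht t' ht' h => by
      by_contra hne
      exact hinj j t t' hne ((mem_filter.mp ht).2.trans (mem_filter.mp ht').2.symm) h
    obtain ⟨t, -, ht⟩ := exists_forall_ne_of_injOn_of_lt_card hπ0 (by rw [h4]; norm_num) p
    refine ⟨t, ?_⟩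
    rw [← hπ t]
    simpa [eq_comm, Fin.forall_fin_succ] using ht
  · intro havoid
    obtain ⟨Q, hQcard, hQ⟩ :=
      exists_card_eq_forall_exists_notMem Pf (fun t => (hPf t).le) havoid hn
    obtain ⟨room, hroom0, hroom⟩ :=
      exists_fiber_zero_eq_and_card_fiber_eq Q (m := (Fintype.card T - 4) / 3) (k := 3) (by omega)
    have hocc : ∀ r p, #{t | room t = r ∧ p ∈ Pf t} ≤ 3 := by
      intro r p
      rw [← filter_filter]
      by_cases hr : r = 0
      · obtain ⟨t, ht, hp⟩ := hQ p
        rw [hr, hroom0, ← Nat.lt_add_one_iff, ← hQcard]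
        exact card_lt_card (filter_ssubset.mpr ⟨t, ht, hp⟩)
      · exact (card_filter_le _ _).trans (hroom r hr).le
    obtain ⟨π, hπ, hπA⟩ := exists_transversal_decomposition_injOn_fibers room Pf hPf hocc
    refine ⟨room, π, hroom0 ▸ hQcard, hroom, fun t => ?_,
      fun j t t' hne hr h => hne (hπ j t t' hr h)⟩
    rw [← hπA t]
    ext
    simp [Fin.exists_fin_succ, eq_comm]

/-- Suppose the number `n` of teams satisfies `n ≡ 1 (mod 3)` and `n ≥ 4`. Then a simple
schedule with exactly one room of size 4 and `(n-4)/3` rooms of size 3 exists if and only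
if every problem is avoided by at least one team. -/
theorem simple_schedule_iff_avoided_of_mod_three_eq_one
    {T P : Type*} [Fintype T] [DecidableEq T] [DecidableEq P]
    (Pf : T → Finset P) (hPf : ∀ t, (Pf t).card = 3)
    (hmod : Fintype.card T % 3 = 1) (hn : 4 ≤ Fintype.card T) :
    (∃ (room : T → Fin ((Fintype.card T - 4) / 3 + 1)) (π : Fin 3 → T → P),
      ((Finset.univ.filter (fun t => room t = 0)).card = 4) ∧
      (∀ r, r ≠ 0 → (Finset.univ.filter (fun t => room t = r)).card = 3) ∧
      (∀ t, ({π 0 t, π 1 t, π 2 t} : Finset P) = Pf t) ∧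
      (∀ (j : Fin 3) (t t' : T), t ≠ t' → room t = room t' → π j t ≠ π j t'))
    ↔ (∀ p : P, ∃ t : T, p ∉ Pf t) :=
  simple_schedule_iff_avoided_of_mod_three_eq_one_general Pf hPf hmod hn
end

section
/- Let T be a finite set of teams, R a finite set of rooms with size(r) ∈ {3,4} for each r ∈ R, and let φ₁, φ₂, φ₃ : T → R be room assignments such that for every round j ∈ {1,2,3} and every room r ∈ R exactly size(r) teams t satisfy φ_j(t) = r. Then there exist functions ω₁, ω₂, ω₃ : T → {1,2,3,4} such that for every round j and every room r the restriction of ω_j to {t ∈ T : φ_j(t) = r} is a bijection onto {1, …, size(r)}, and every team t receives three distinct order positions, i.e. |{ω₁(t), ω₂(t), ω₃(t)}| = 3. -/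
/-!
Think of the Fights and the teams as the two sides of a bipartite graph, with a team joined to
each of its three Fights. Every team has degree 3, every Fight has degree 3 or 4, and an order
fair schedule is an edge colouring with colours `1, …, 4` that is proper at the teams and uses
exactly the colours `1, …, size` at every Fight.

First, Hall's theorem picks a distinct team for each Fight of size 4. This works because every
such Fight has 4 teams and every team is in at most 3 of them. That team takes position 4 and
leaves its Fight. Each Fight now has 3 teams, while the chosen teams have degree 2. Grouping the
chosen teams three at a time into dummy Fights gives a 3-regular bipartite graph. Peeling off
perfect matchings (Hall again) colours it with `1, 2, 3`. Nothing depends on 3: the same works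
for `k` rounds and sizes `k` or `k + 1`.
-/

open Finset Function

section FairOrder

variable {ι κ α : Type*}

/-- `B i` is the set of teams of the Fight `i` and `c i a` is the order position of `a` in it. -/
structure IsFairOrder (B : ι → Finset α) (c : ι → α → ℕ) : Prop where
  mapsTo : ∀ i, Set.MapsTo (c i) (B i) (Set.Icc 1 #(B i))
  injOn : ∀ i, Set.InjOn (c i) (B i)
  injOn_index : ∀ a, Set.InjOn (c · a) {i | a ∈ B i}

theorem IsFairOrder.bijOn {B : ι → Finset α} {c : ι → α → ℕ} (hc : IsFairOrder B c) (i : ι) :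
    Set.BijOn (c i) (B i) (Set.Icc 1 #(B i)) := by
  refine ⟨hc.mapsTo i, hc.injOn i, ?_⟩
  simpa using surjOn_of_injOn_of_card_le (t := Icc 1 #(B i)) (c i)
    (by simpa using hc.mapsTo i) (hc.injOn i) (by simp)

theorem IsFairOrder.comp {B : ι → Finset α} {c : ι → α → ℕ} (hc : IsFairOrder B c)
    {f : κ → ι} (hf : Injective f) : IsFairOrder (B ∘ f) (c ∘ f) where
  mapsTo i := hc.mapsTo (f i)
  injOn i := hc.injOn (f i)
  injOn_index a _ hi _ hi' h := hf (hc.injOn_index a hi hi' h)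

end FairOrder

theorem card_filter_sum {ι κ : Type*} [Fintype ι] [Fintype κ] (P : ι ⊕ κ → Prop)
    [DecidablePred P] : #{x | P x} = #{i | P (.inl i)} + #{j | P (.inr j)} := by
  simp only [card_filter, Fintype.sum_sum_type]

theorem card_filter_mem_image_curry {Q J α : Type*} [Fintype Q] [Fintype J] [DecidableEq α]
    {s : Q × J → α} (hs : Injective s) (a : α) :
    #{q | a ∈ univ.image fun j => s (q, j)} = #{p | s p = a} := by
  classical
  have hfst : ({q | a ∈ univ.image fun j => s (q, j)} : Finset Q) =
      ({p | s p = a} : Finset (Q × J)).image Prod.fst := by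
    ext q
    simp
  rw [hfst, card_image_of_injOn]
  intro p hp p' hp' _
  simp only [coe_filter, mem_univ, true_and] at hp hp'
  exact hs (hp.trans hp'.symm)

theorem card_filter_apply_fst_eq_snd {J T R : Type*} [Fintype J] [Fintype R] [DecidableEq R]
    (φ : J → T → R) (t : T) : #{f : J × R | φ f.1 t = f.2} = Fintype.card J := by
  classical
  have hgraph : ({f : J × R | φ f.1 t = f.2} : Finset _) = univ.image fun j => (j, φ j t) := by
    ext ⟨j, r⟩
    simp [eq_comm]
  rw [hgraph, card_image_of_injective _ fun j j' h => congrArg Prod.fst h, card_univ]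

section Matching

variable {ι κ α : Type*} [DecidableEq α]

theorem exists_injective_mem_of_card_filter_le_of_le_card [Fintype ι] (B : ι → Finset α)
    {n : ℕ} (hn : 0 < n) (hcard : ∀ i, n ≤ #(B i)) (hdeg : ∀ a, #{i | a ∈ B i} ≤ n) :
    ∃ g : ι → α, Injective g ∧ ∀ i, g i ∈ B i := by
  classical
  refine (all_card_le_biUnion_card_iff_exists_injective B).1 fun s => ?_
  refine Nat.le_of_mul_le_mul_right
    (card_mul_le_card_mul (fun i a => a ∈ B i) (fun i hi => ?_) (fun a _ => ?_)) hn
  · rw [bipartiteAbove, filter_mem_eq_inter, inter_eq_right.2 (subset_biUnion_of_mem B hi)]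
    exact hcard i
  · exact (card_le_card (filter_subset_filter _ (subset_univ s))).trans (hdeg a)

theorem card_eq_card_of_regular [Fintype ι] [Fintype α] (B : ι → Finset α) {n : ℕ} (hn : 0 < n)
    (hcard : ∀ i, #(B i) = n) (hdeg : ∀ a, #{i | a ∈ B i} = n) :
    Fintype.card ι = Fintype.card α := by
  refine Nat.eq_of_mul_eq_mul_right hn
    (card_mul_eq_card_mul (fun i a => a ∈ B i) (fun i _ => ?_) (fun a _ => hdeg a))
  rw [bipartiteAbove, filter_mem_eq_inter, univ_inter, hcard]

variable [DecidableEq ι] [Fintype κ]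

def eraseMatching (B : ι → Finset α) (ℓ : κ → ι) (s : κ → α) (i : ι) : Finset α :=
  {a ∈ B i | ¬ ∃ p, ℓ p = i ∧ s p = a}

variable {B : ι → Finset α} {ℓ : κ → ι} {s : κ → α}

theorem card_eraseMatching_add (hs : Injective s) (hsB : ∀ p, s p ∈ B (ℓ p)) (i : ι) :
    #(eraseMatching B ℓ s i) + #{p | ℓ p = i} = #(B i) := by
  have hmatched : {a ∈ B i | ∃ p, ℓ p = i ∧ s p = a} = ({p | ℓ p = i} : Finset κ).image s := by
    ext a
    simp only [mem_filter, mem_image, mem_univ, true_and]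
    exact ⟨fun h => h.2, fun ⟨p, hp, hpa⟩ => ⟨hp ▸ hpa ▸ hsB p, p, hp, hpa⟩⟩
  rw [eraseMatching, add_comm, ← card_image_of_injective _ hs, ← hmatched,
    card_filter_add_card_filter_not]

theorem card_filter_mem_eraseMatching_add [Fintype ι] (hℓ : Injective ℓ)
    (hsB : ∀ p, s p ∈ B (ℓ p)) (a : α) :
    #{i | a ∈ eraseMatching B ℓ s i} + #{p | s p = a} = #{i | a ∈ B i} := by
  have hmatched :
      ({i | a ∈ B i ∧ ∃ p, ℓ p = i ∧ s p = a} : Finset ι) = ({p | s p = a} : Finset κ).image ℓ := by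
    ext i
    simp only [mem_filter, mem_image, mem_univ, true_and]
    exact ⟨fun ⟨_, p, hp, hpa⟩ => ⟨p, hpa, hp⟩, fun ⟨p, hpa, hp⟩ => ⟨hp ▸ hpa ▸ hsB p, p, hp, hpa⟩⟩
  rw [← card_filter_add_card_filter_not (s := {i | a ∈ B i}) (fun i => ∃ p, ℓ p = i ∧ s p = a),
    filter_filter, filter_filter, hmatched, card_image_of_injective _ hℓ, add_comm]
  simp only [eraseMatching, mem_filter]

theorem IsFairOrder.extend (hℓ : Injective ℓ) (hs : Injective s) (hsB : ∀ p, s p ∈ B (ℓ p))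
    {c : ι → α → ℕ} (hc : IsFairOrder (eraseMatching B ℓ s) c) {k : ℕ}
    (hk : ∀ i, #(eraseMatching B ℓ s i) = k) :
    IsFairOrder B (fun i a => if ∃ p, ℓ p = i ∧ s p = a then k + 1 else c i a) := by
  have hunmatched : ∀ i a, a ∈ B i → ¬ (∃ p, ℓ p = i ∧ s p = a) →
      a ∈ eraseMatching B ℓ s i ∧ c i a ≤ k := fun i a ha h => by
    have hmem : a ∈ eraseMatching B ℓ s i := mem_filter.2 ⟨ha, h⟩
    exact ⟨hmem, hk i ▸ (hc.mapsTo i hmem).2⟩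
  refine ⟨fun i a ha => ?_, fun i a ha b hb hab => ?_, fun a i hi i' hi' h => ?_⟩
  · have hcard := card_eraseMatching_add hs hsB i
    rw [hk] at hcard
    split_ifs with h
    · obtain ⟨p, hp, -⟩ := h
      have : 0 < #{p | ℓ p = i} := card_pos.2 ⟨p, by simp [hp]⟩
      exact ⟨by omega, by omega⟩
    · exact ⟨(hc.mapsTo i (hunmatched i a ha h).1).1, by have := (hunmatched i a ha h).2; omega⟩
  · split_ifs at hab with ha' hb' hb'
    · obtain ⟨p, hp, rfl⟩ := ha'
      obtain ⟨p', hp', rfl⟩ := hb'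
      rw [hℓ (hp.trans hp'.symm)]
    · have := (hunmatched i b hb hb').2; omega
    · have := (hunmatched i a ha ha').2; omega
    · exact hc.injOn i (hunmatched i a ha ha').1 (hunmatched i b hb hb').1 hab
  · dsimp only at h
    split_ifs at h with hi₁ hi₂ hi₂
    · obtain ⟨p, rfl, hp⟩ := hi₁
      obtain ⟨p', rfl, hp'⟩ := hi₂
      rw [hs (hp.trans hp'.symm)]
    · have := (hunmatched i' a hi' hi₂).2; omega
    · have := (hunmatched i a hi hi₁).2; omega
    · exact hc.injOn_index a (hunmatched i a hi hi₁).1 (hunmatched i' a hi' hi₂).1 h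

end Matching

section Colouring

variable {ι α : Type*} [Fintype ι] [Fintype α] [DecidableEq α]

theorem exists_isFairOrder_of_regular [DecidableEq ι] (k : ℕ) (B : ι → Finset α) (hcard : ∀ i, #(B i) = k)
    (hdeg : ∀ a, #{i | a ∈ B i} = k) : ∃ c, IsFairOrder B c := by
  induction k generalizing B with
  | zero =>
    have hB : ∀ i, B i = ∅ := fun i => card_eq_zero.1 (hcard i)
    exact ⟨fun _ _ => 0, fun i => by simp [hB], fun i => by simp [hB], fun a => by simp [hB]⟩
  | succ k ih =>
    obtain ⟨g, hg, hgB⟩ := exists_injective_mem_of_card_filter_le_of_le_card B k.succ_pos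
      (fun i => (hcard i).ge) (fun a => (hdeg a).le)
    have hg_bij : Bijective g := (Fintype.bijective_iff_injective_and_card g).2
      ⟨hg, card_eq_card_of_regular B k.succ_pos hcard hdeg⟩
    have hcard' : ∀ i, #(eraseMatching B id g i) = k := fun i => by
      have := card_eraseMatching_add (ℓ := id) hg hgB i
      rw [show ({p | id p = i} : Finset ι) = {i} by ext; simp, card_singleton, hcard] at this
      omega
    have hdeg' : ∀ a, #{i | a ∈ eraseMatching B id g i} = k := fun a => by
      have := card_filter_mem_eraseMatching_add (ℓ := id) injective_id hgB a
      obtain ⟨p, rfl⟩ := hg_bij.2 a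
      rw [show ({q | g q = g p} : Finset ι) = {p} by ext; simp [hg.eq_iff], card_singleton,
        hdeg] at this
      omega
    obtain ⟨c, hc⟩ := ih (eraseMatching B id g) hcard' hdeg'
    exact ⟨_, hc.extend injective_id hg hgB hcard'⟩

/-- By double counting, the number of sets of size `k + 1` is `k * (card α - card ι)`. -/
theorem dvd_card_filter_card_eq_succ (B : ι → Finset α) {k : ℕ}
    (hdeg : ∀ a, #{i | a ∈ B i} = k) (hcard : ∀ i, #(B i) = k ∨ #(B i) = k + 1) :
    k ∣ #{i | #(B i) = k + 1} := by
  have hsum := sum_card_bipartiteAbove_eq_sum_card_bipartiteBelow (fun i a => a ∈ B i)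
    (s := univ) (t := univ)
  simp only [bipartiteAbove, bipartiteBelow, filter_mem_eq_inter, univ_inter, hdeg, sum_const,
    card_univ, smul_eq_mul] at hsum
  have hsplit : ∑ i, #(B i) = ∑ i : ι, (k + if #(B i) = k + 1 then 1 else 0) :=
    sum_congr rfl fun i _ => by rcases hcard i with h | h <;> simp [h]
  rw [sum_add_distrib, sum_const, ← card_filter, card_univ, smul_eq_mul] at hsplit
  have : #{i | #(B i) = k + 1} = Fintype.card α * k - Fintype.card ι * k := by omega
  rw [this, ← Nat.sub_mul]
  exact dvd_mul_left _ _

theorem exists_fin_prod_index_of_card_eq_or_eq_succ [DecidableEq ι] (B : ι → Finset α) {k : ℕ}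
    (hdeg : ∀ a, #{i | a ∈ B i} = k) (hcard : ∀ i, #(B i) = k ∨ #(B i) = k + 1) :
    ∃ (m : ℕ) (ℓ : Fin m × Fin k → ι), Injective ℓ ∧ ∀ i, #(B i) = k + #{p | ℓ p = i} := by
  obtain ⟨m, hm⟩ := dvd_card_filter_card_eq_succ B hdeg hcard
  let e : Fin m × Fin k ≃ {i // #(B i) = k + 1} :=
    Fintype.equivOfCardEq (by rw [Fintype.card_subtype, hm]; simp [mul_comm])
  refine ⟨m, fun p => e p, Subtype.val_injective.comp e.injective, fun i => ?_⟩
  rcases hcard i with h | h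
  · have : ∀ p, (e p : ι) ≠ i := fun p hp => by have := (e p).2; simp_all
    simp [h, this]
  · have : ({p | (e p : ι) = i} : Finset _) = {e.symm ⟨i, h⟩} := by
      ext p
      simp [Equiv.eq_symm_apply, Subtype.ext_iff]
    rw [this, card_singleton, h]

theorem exists_isFairOrder_of_card_eq_or_eq_succ [DecidableEq ι] (B : ι → Finset α) {k : ℕ}
    (hdeg : ∀ a, #{i | a ∈ B i} = k) (hcard : ∀ i, #(B i) = k ∨ #(B i) = k + 1) :
    ∃ c, IsFairOrder B c := by
  obtain ⟨m, ℓ, hℓ, hfibre⟩ := exists_fin_prod_index_of_card_eq_or_eq_succ B hdeg hcard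
  obtain ⟨s, hs, hsB⟩ : ∃ s : Fin m × Fin k → α, Injective s ∧ ∀ p, s p ∈ B (ℓ p) := by
    refine exists_injective_mem_of_card_filter_le_of_le_card (B ∘ ℓ) k.succ_pos
      (fun p => ?_) fun a => ?_
    · rw [comp_apply, hfibre]
      exact Nat.add_le_add_left (card_pos.2 ⟨p, by simp⟩) k
    · calc #{p | a ∈ B (ℓ p)} ≤ #{i | a ∈ B i} :=
            card_le_card_of_injOn ℓ (fun p hp => by simpa using hp) hℓ.injOn
        _ ≤ k + 1 := (hdeg a).trans_le k.le_succ
  let D : ι ⊕ Fin m → Finset α :=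
    Sum.elim (eraseMatching B ℓ s) fun q => univ.image fun j => s (q, j)
  have hDcard : ∀ x, #(D x) = k
    | .inl i => by
      have := card_eraseMatching_add hs hsB i
      have := hfibre i
      simp only [D, Sum.elim_inl]
      omega
    | .inr q => by
      simp only [D, Sum.elim_inr]
      rw [card_image_of_injective _ fun j j' h => by simpa using hs h, card_univ, Fintype.card_fin]
  have hDdeg : ∀ a, #{x | a ∈ D x} = k := fun a => by
    have := card_filter_mem_eraseMatching_add hℓ hsB a
    rw [hdeg, ← card_filter_mem_image_curry hs a] at this
    rw [card_filter_sum]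
    exact this
  obtain ⟨c, hc⟩ := exists_isFairOrder_of_regular k D hDcard hDdeg
  exact ⟨_, (hc.comp Sum.inl_injective).extend hℓ hs hsB fun i => hDcard (.inl i)⟩

end Colouring

theorem order_fair_completion_general
    {T R : Type*} [Fintype T] [Fintype R] [DecidableEq R]
    (size : R → ℕ) (hsize : ∀ r, size r = 3 ∨ size r = 4)
    (φ : Fin 3 → T → R)
    (hfill : ∀ (j : Fin 3) (r : R),
      (Finset.univ.filter (fun t => φ j t = r)).card = size r) :
    ∃ ω : Fin 3 → T → ℕ,
      (∀ (j : Fin 3) (r : R),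
        Set.BijOn (ω j) {t : T | φ j t = r} (Set.Icc 1 (size r))) ∧
      (∀ t : T, ({ω 0 t, ω 1 t, ω 2 t} : Finset ℕ).card = 3) := by
  classical
  let B : Fin 3 × R → Finset T := fun f => {t | φ f.1 t = f.2}
  obtain ⟨c, hc⟩ := exists_isFairOrder_of_card_eq_or_eq_succ B (k := 3)
    (fun t => by simpa [B] using card_filter_apply_fst_eq_snd φ t)
    (fun f => hfill f.1 f.2 ▸ hsize f.2)
  refine ⟨fun j t => c (j, φ j t) t, fun j r => ?_, fun t => ?_⟩
  · have hbij := hc.bijOn (j, r)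
    have hroom : (B (j, r) : Set T) = {t | φ j t = r} := by simp [B]
    rw [hroom, hfill] at hbij
    exact hbij.congr fun t (ht : φ j t = r) => by simp only [ht]
  · have hinj : Injective fun j => c (j, φ j t) t := fun j j' h =>
      congrArg Prod.fst (hc.injOn_index t (by simp [B]) (by simp [B]) h)
    rw [card_eq_three]
    exact ⟨_, _, _, hinj.ne (by decide), hinj.ne (by decide), hinj.ne (by decide), rfl⟩

/-- Given room assignments `φ j : T → R` for the three rounds such that in every round
each room `r` receives exactly `size r ∈ {3,4}` teams, there exist order assignments
`ω j : T → ℕ` such that in every round the teams of each room `r` are bijectively mapped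
onto the order positions `{1, …, size r}`, and every team receives three distinct order
positions in its three Fights. -/
theorem order_fair_completion
    {T R : Type*} [Fintype T] [Fintype R] [DecidableEq T] [DecidableEq R]
    (size : R → ℕ) (hsize : ∀ r, size r = 3 ∨ size r = 4)
    (φ : Fin 3 → T → R)
    (hfill : ∀ (j : Fin 3) (r : R),
      (Finset.univ.filter (fun t => φ j t = r)).card = size r) :
    ∃ ω : Fin 3 → T → ℕ,
      (∀ (j : Fin 3) (r : R),
        Set.BijOn (ω j) {t : T | φ j t = r} (Set.Icc 1 (size r))) ∧
      (∀ t : T, ({ω 0 t, ω 1 t, ω 2 t} : Finset ℕ).card = 3) :=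
  order_fair_completion_general size hsize φ hfill
end

section
/- There exists a binary vector x = (x_{ijkq}) satisfying the feasibility constraints (2)–(5) together with the fairness inequalities x_{ijkq} + Σ_{w∈[3]} x_{αjkw} + c_{α ℓ(i,q)} ≤ 2 for every round j ∈ [3], every room k ∈ [s], every q ∈ [3], and every ordered pair of distinct teams i ≠ α, if and only if there exists a fair schedule. Moreover, a binary vector x satisfying (2)–(5) together with these fairness inequalities imposed only for rounds j ∈ {1,2} exists if and only if there exists a weakly fair schedule. -/
/-!
An ILP solution is the 0/1 incidence vector of "in round `j`, team `i` presents its `q`-th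
problem in room `k`". Constraint (3) makes it the graph of a map `(i, j) ↦ (room, slot)`, and
constraint (2) makes the slots of every team a permutation of `Fin 3`. Under this encoding (4)
is the room capacity, (5) forbids a problem twice in a room, and the fairness inequality fails
exactly when `i` and `α` share room `k` in round `j` while the problem of `i` lies in the
portfolio of `α`. Conversely, since `pq i` is injective, a schedule with
`{π₁(i), π₂(i), π₃(i)} = P(i)` determines that permutation.
-/

open Finset

theorem Fintype.exists_eq_ite_of_sum_eq_one {α : Type*} [Fintype α] [DecidableEq α] {g : α → ℕ}
    (hg : ∀ a, g a = 0 ∨ g a = 1) (hsum : ∑ a, g a = 1) :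
    ∃ a, g = fun b => if b = a then 1 else 0 := by
  have hcard : #{b | g b = 1} = ∑ b, g b := by
    rw [card_filter]
    refine Finset.sum_congr rfl fun b _ => ?_
    rcases hg b with h | h <;> simp [h]
  obtain ⟨a, ha⟩ := card_eq_one.1 (hcard.trans hsum)
  refine ⟨a, funext fun b => ?_⟩
  have hb : g b = 1 ↔ b = a := by simpa using congrArg (b ∈ ·) ha
  rcases hg b with h | h <;> simp_all

theorem Finset.image_univ_comp_equiv {ι κ β : Type*} [Fintype ι] [Fintype κ] [DecidableEq β]
    (e : ι ≃ κ) (g : κ → β) : univ.image (g ∘ e) = univ.image g := by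
  ext b
  simpa using (e.surjective.exists (p := fun a => g a = b)).symm

theorem Finset.image_univ_eq_image_univ_iff_exists_perm {ι β : Type*} [Fintype ι]
    [DecidableEq β] {f g : ι → β} (hg : Function.Injective g) :
    univ.image f = univ.image g ↔ ∃ e : Equiv.Perm ι, f = g ∘ e := by
  refine ⟨fun h => ?_, ?_⟩
  · have hf : ∀ j, ∃ q, g q = f j := fun j => by
      simpa [h] using mem_image_of_mem f (mem_univ j)
    choose e he using hf
    have he_surj : Function.Surjective e := fun q => by
      obtain ⟨j, -, hj⟩ := mem_image.1 (h ▸ mem_image_of_mem g (mem_univ q))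
      exact ⟨j, hg ((he j).trans hj)⟩
    exact ⟨.ofBijective e ⟨Finite.injective_iff_surjective.2 he_surj, he_surj⟩,
      funext fun j => (he j).symm⟩
  · rintro ⟨e, rfl⟩
    exact image_univ_comp_equiv e g

theorem Fin.image_univ_three {β : Type*} [DecidableEq β] (f : Fin 3 → β) :
    univ.image f = {f 0, f 1, f 2} := by
  ext
  simp [Fin.exists_fin_succ, eq_comm]

theorem forall_card_filter_le_one_iff {T R P : Type*} [Fintype T] [DecidableEq R] [DecidableEq P]
    (φ : T → R) (π : T → P) :
    (∀ k ℓ, #{i | φ i = k ∧ π i = ℓ} ≤ 1) ↔ ∀ i i', i ≠ i' → φ i = φ i' → π i ≠ π i' := by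
  refine ⟨fun h i i' hne hφ hπ => hne ?_, fun h k ℓ => card_le_one.2 fun i hi i' hi' => ?_⟩
  · exact card_le_one.1 (h (φ i) (π i)) i (by simp) i' (by simp [hφ, hπ])
  · simp only [mem_filter, mem_univ, true_and] at hi hi'
    by_contra hne
    exact h i i' hne (hi.1.trans hi'.1.symm) (hi.2.trans hi'.2.symm)

section Schedule

variable {T R P : Type*}

def IsILPSolution [Fintype T] [Fintype R] [DecidableEq P] (size : R → ℕ) (pq : T → Fin 3 → P)
    (J : Fin 3 → Prop) (x : T → Fin 3 → R → Fin 3 → ℕ) : Prop :=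
  (∀ i j k q, x i j k q = 0 ∨ x i j k q = 1) ∧
  (∀ i q, ∑ j, ∑ k, x i j k q = 1) ∧
  (∀ i j, ∑ k, ∑ q, x i j k q = 1) ∧
  (∀ j k, ∑ i, ∑ q, x i j k q = size k) ∧
  (∀ j k ℓ, ∑ i, ∑ q, (if pq i q = ℓ then x i j k q else 0) ≤ 1) ∧
  (∀ j, J j → ∀ k q i α, i ≠ α →
    x i j k q + (∑ w, x α j k w) +
      (if pq i q ∈ ({pq α 0, pq α 1, pq α 2} : Finset P) then 1 else 0) ≤ 2)

def IsSchedule [Fintype T] [DecidableEq R] [DecidableEq P] (size : R → ℕ) (pq : T → Fin 3 → P)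
    (J : Fin 3 → Prop) (π : Fin 3 → T → P) (φ : Fin 3 → T → R) : Prop :=
  (∀ i, ({π 0 i, π 1 i, π 2 i} : Finset P) = {pq i 0, pq i 1, pq i 2}) ∧
  (∀ j i i', i ≠ i' → φ j i = φ j i' → π j i ≠ π j i') ∧
  (∀ j k, #{i | φ j i = k} = size k) ∧
  (∀ j, J j → ∀ i i', i ≠ i' → φ j i = φ j i' → π j i ∉ ({pq i' 0, pq i' 1, pq i' 2} : Finset P))

/-- In round `j`, team `i` presents its problem number `σ i j` in room `φ j i`. -/
def ilpVector [DecidableEq R] (φ : Fin 3 → T → R) (σ : T → Equiv.Perm (Fin 3)) :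
    T → Fin 3 → R → Fin 3 → ℕ :=
  fun i j k q => if φ j i = k ∧ σ i j = q then 1 else 0

theorem exists_eq_ilpVector [Fintype R] [DecidableEq R] {x : T → Fin 3 → R → Fin 3 → ℕ}
    (hbin : ∀ i j k q, x i j k q = 0 ∨ x i j k q = 1)
    (hslot : ∀ i q, ∑ j, ∑ k, x i j k q = 1) (hround : ∀ i j, ∑ k, ∑ q, x i j k q = 1) :
    ∃ φ σ, x = ilpVector φ σ := by
  choose p hp using fun i j => Fintype.exists_eq_ite_of_sum_eq_one
    (g := fun p : R × Fin 3 => x i j p.1 p.2) (fun p => hbin i j p.1 p.2)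
    (by rw [Fintype.sum_prod_type]; exact hround i j)
  have hx : ∀ i j k q, x i j k q = if (p i j).1 = k ∧ (p i j).2 = q then 1 else 0 := by
    intro i j k q
    simpa [Prod.ext_iff, eq_comm] using congrFun (hp i j) (k, q)
  have hsurj : ∀ i, Function.Surjective fun j => (p i j).2 := by
    intro i q
    have h := hslot i q
    simp only [hx, ite_and, Fintype.sum_ite_eq] at h
    obtain ⟨j, -, hj⟩ := exists_ne_zero_of_sum_ne_zero (h ▸ one_ne_zero)
    exact ⟨j, by simpa using hj⟩
  refine ⟨fun j i => (p i j).1,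
    fun i => .ofBijective _ ⟨Finite.injective_iff_surjective.2 (hsurj i), hsurj i⟩, ?_⟩
  funext i j k q
  exact hx i j k q

section ilpVector

variable [DecidableEq R] (φ : Fin 3 → T → R) (σ : T → Equiv.Perm (Fin 3))

theorem sum_slot_ilpVector (i : T) (j : Fin 3) (k : R) :
    ∑ q, ilpVector φ σ i j k q = if φ j i = k then 1 else 0 := by
  simp [ilpVector, ite_and]

theorem sum_round_room_ilpVector [Fintype R] (i : T) (q : Fin 3) :
    ∑ j, ∑ k, ilpVector φ σ i j k q = 1 := by
  simp [ilpVector, ite_and, ← Equiv.eq_symm_apply]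

theorem sum_room_slot_ilpVector [Fintype R] (i : T) (j : Fin 3) :
    ∑ k, ∑ q, ilpVector φ σ i j k q = 1 := by
  simp [ilpVector, ite_and]

theorem sum_team_slot_ilpVector [Fintype T] (j : Fin 3) (k : R) :
    ∑ i, ∑ q, ilpVector φ σ i j k q = #{i | φ j i = k} := by
  simp [ilpVector, ite_and]

theorem sum_team_slot_ite_ilpVector [Fintype T] [DecidableEq P] (pq : T → Fin 3 → P)
    (j : Fin 3) (k : R) (ℓ : P) :
    ∑ i, ∑ q, (if pq i q = ℓ then ilpVector φ σ i j k q else 0) =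
      #{i | φ j i = k ∧ pq i (σ i j) = ℓ} := by
  rw [card_filter]
  refine Finset.sum_congr rfl fun i _ => ?_
  rw [← Fintype.sum_ite_eq (σ i j) (fun q => if φ j i = k ∧ pq i q = ℓ then 1 else 0)]
  refine Finset.sum_congr rfl fun q _ => ?_
  simp only [ilpVector]
  split_ifs <;> simp_all

theorem forall_fairness_ineq_ilpVector_iff [DecidableEq P] (pq : T → Fin 3 → P) (j : Fin 3) :
    (∀ k q i α, i ≠ α → ilpVector φ σ i j k q + (∑ w, ilpVector φ σ α j k w) +
        (if pq i q ∈ ({pq α 0, pq α 1, pq α 2} : Finset P) then 1 else 0) ≤ 2) ↔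
      ∀ i α, i ≠ α → φ j i = φ j α → pq i (σ i j) ∉ ({pq α 0, pq α 1, pq α 2} : Finset P) := by
  refine ⟨fun h i α hne hφ hmem => ?_, fun h k q i α hne => ?_⟩
  · have := h (φ j i) (σ i j) i α hne
    simp [ilpVector, hφ, hmem] at this
  · rw [sum_slot_ilpVector]
    unfold ilpVector
    split_ifs with h₁ h₂ h₃ <;>
      first | omega | exact absurd (h₁.2 ▸ h₃) (h i α hne (h₁.1.trans h₂.symm))

end ilpVector

theorem isILPSolution_ilpVector_iff [Fintype T] [Fintype R] [DecidableEq R] [DecidableEq P]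
    {size : R → ℕ} {pq : T → Fin 3 → P} {J : Fin 3 → Prop} {φ : Fin 3 → T → R}
    {σ : T → Equiv.Perm (Fin 3)} :
    IsILPSolution size pq J (ilpVector φ σ) ↔ IsSchedule size pq J (fun j i => pq i (σ i j)) φ := by
  have hbin : ∀ i j k q, ilpVector φ σ i j k q = 0 ∨ ilpVector φ σ i j k q = 1 := by
    intro i j k q
    unfold ilpVector
    split_ifs <;> simp
  have hportfolio : ∀ i,
      ({pq i (σ i 0), pq i (σ i 1), pq i (σ i 2)} : Finset P) = {pq i 0, pq i 1, pq i 2} :=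
    fun i => by
      simpa only [Fin.image_univ_three, Function.comp_apply] using
        image_univ_comp_equiv (σ i) (pq i)
  simp only [IsILPSolution, IsSchedule, sum_round_room_ilpVector, sum_room_slot_ilpVector,
    sum_team_slot_ilpVector, sum_team_slot_ite_ilpVector, forall_card_filter_le_one_iff,
    forall_fairness_ineq_ilpVector_iff, hbin, hportfolio, implies_true, true_and]
  exact and_left_comm

theorem exists_isILPSolution_iff_exists_ilpVector [Fintype T] [Fintype R] [DecidableEq R]
    [DecidableEq P] {size : R → ℕ} {pq : T → Fin 3 → P} {J : Fin 3 → Prop} :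
    (∃ x, IsILPSolution size pq J x) ↔ ∃ φ σ, IsILPSolution size pq J (ilpVector φ σ) := by
  refine ⟨fun ⟨x, hx⟩ => ?_, fun ⟨φ, σ, h⟩ => ⟨_, h⟩⟩
  obtain ⟨φ, σ, rfl⟩ := exists_eq_ilpVector hx.1 hx.2.1 hx.2.2.1
  exact ⟨φ, σ, hx⟩

theorem exists_isSchedule_iff_exists_perm [Fintype T] [DecidableEq R] [DecidableEq P]
    {size : R → ℕ} {pq : T → Fin 3 → P} (hpq : ∀ i, Function.Injective (pq i))
    {J : Fin 3 → Prop} :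
    (∃ π φ, IsSchedule size pq J π φ) ↔
      ∃ (φ : Fin 3 → T → R) (σ : T → Equiv.Perm (Fin 3)),
        IsSchedule size pq J (fun j i => pq i (σ i j)) φ := by
  refine ⟨fun ⟨π, φ, h⟩ => ?_, fun ⟨φ, σ, h⟩ => ⟨_, φ, h⟩⟩
  have hσ : ∀ i, ∃ e : Equiv.Perm (Fin 3), (fun j => π j i) = pq i ∘ e := fun i =>
    (image_univ_eq_image_univ_iff_exists_perm (hpq i)).1 <| by
      simpa only [Fin.image_univ_three] using h.1 i
  choose σ hσ using hσ
  refine ⟨φ, σ, ?_⟩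
  convert h using 1
  funext j i
  exact (congrFun (hσ i) j).symm

theorem exists_isILPSolution_iff_exists_isSchedule [Fintype T] [Fintype R] [DecidableEq R]
    [DecidableEq P] {size : R → ℕ} {pq : T → Fin 3 → P}
    (hpq : ∀ i, Function.Injective (pq i)) (J : Fin 3 → Prop) :
    (∃ x, IsILPSolution size pq J x) ↔ ∃ π φ, IsSchedule size pq J π φ := by
  rw [exists_isILPSolution_iff_exists_ilpVector, exists_isSchedule_iff_exists_perm hpq]
  simp only [isILPSolution_ilpVector_iff]

end Schedule

theorem ilp_fair_iff_fair_schedule_general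
    (n m s : ℕ) (size : Fin s → ℕ)
    (pq : Fin n → Fin 3 → Fin m) (hpq : ∀ i, Function.Injective (pq i)) :
    ((∃ x : Fin n → Fin 3 → Fin s → Fin 3 → ℕ,
      (∀ i j k q, x i j k q = 0 ∨ x i j k q = 1) ∧
      (∀ (i : Fin n) (q : Fin 3), ∑ j : Fin 3, ∑ k : Fin s, x i j k q = 1) ∧
      (∀ (i : Fin n) (j : Fin 3), ∑ k : Fin s, ∑ q : Fin 3, x i j k q = 1) ∧
      (∀ (j : Fin 3) (k : Fin s), ∑ i : Fin n, ∑ q : Fin 3, x i j k q = size k) ∧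
      (∀ (j : Fin 3) (k : Fin s) (ℓ : Fin m),
        ∑ i : Fin n, ∑ q : Fin 3, (if pq i q = ℓ then x i j k q else 0) ≤ 1) ∧
      (∀ (j : Fin 3) (k : Fin s) (q : Fin 3) (i α : Fin n), i ≠ α →
        x i j k q + (∑ w : Fin 3, x α j k w) +
          (if pq i q ∈ ({pq α 0, pq α 1, pq α 2} : Finset (Fin m)) then 1 else 0) ≤ 2))
    ↔
    (∃ (π : Fin 3 → Fin n → Fin m) (φ : Fin 3 → Fin n → Fin s),
      (∀ i : Fin n, ({π 0 i, π 1 i, π 2 i} : Finset (Fin m))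
        = {pq i 0, pq i 1, pq i 2}) ∧
      (∀ (j : Fin 3) (i i' : Fin n), i ≠ i' → φ j i = φ j i' → π j i ≠ π j i') ∧
      (∀ (j : Fin 3) (k : Fin s),
        (Finset.univ.filter (fun i => φ j i = k)).card = size k) ∧
      (∀ (j : Fin 3) (i i' : Fin n), i ≠ i' → φ j i = φ j i' →
        π j i ∉ ({pq i' 0, pq i' 1, pq i' 2} : Finset (Fin m)))))
    ∧
    ((∃ x : Fin n → Fin 3 → Fin s → Fin 3 → ℕ,
      (∀ i j k q, x i j k q = 0 ∨ x i j k q = 1) ∧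
      (∀ (i : Fin n) (q : Fin 3), ∑ j : Fin 3, ∑ k : Fin s, x i j k q = 1) ∧
      (∀ (i : Fin n) (j : Fin 3), ∑ k : Fin s, ∑ q : Fin 3, x i j k q = 1) ∧
      (∀ (j : Fin 3) (k : Fin s), ∑ i : Fin n, ∑ q : Fin 3, x i j k q = size k) ∧
      (∀ (j : Fin 3) (k : Fin s) (ℓ : Fin m),
        ∑ i : Fin n, ∑ q : Fin 3, (if pq i q = ℓ then x i j k q else 0) ≤ 1) ∧
      (∀ j : Fin 3, (j = 0 ∨ j = 1) → ∀ (k : Fin s) (q : Fin 3) (i α : Fin n), i ≠ α →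
        x i j k q + (∑ w : Fin 3, x α j k w) +
          (if pq i q ∈ ({pq α 0, pq α 1, pq α 2} : Finset (Fin m)) then 1 else 0) ≤ 2))
    ↔
    (∃ (π : Fin 3 → Fin n → Fin m) (φ : Fin 3 → Fin n → Fin s),
      (∀ i : Fin n, ({π 0 i, π 1 i, π 2 i} : Finset (Fin m))
        = {pq i 0, pq i 1, pq i 2}) ∧
      (∀ (j : Fin 3) (i i' : Fin n), i ≠ i' → φ j i = φ j i' → π j i ≠ π j i') ∧
      (∀ (j : Fin 3) (k : Fin s),
        (Finset.univ.filter (fun i => φ j i = k)).card = size k) ∧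
      (∀ j : Fin 3, (j = 0 ∨ j = 1) → ∀ i i' : Fin n, i ≠ i' → φ j i = φ j i' →
        π j i ∉ ({pq i' 0, pq i' 1, pq i' 2} : Finset (Fin m))))) := by
  refine ⟨?_, exists_isILPSolution_iff_exists_isSchedule hpq fun j => j = 0 ∨ j = 1⟩
  simpa only [IsILPSolution, IsSchedule, true_implies] using
    exists_isILPSolution_iff_exists_isSchedule (size := size) hpq fun _ => True

/-- A binary vector `x` satisfying the feasibility constraints (2)–(5) together with the
fairness inequalities (6) for all rounds exists if and only if a fair schedule exists;
and such an `x` with the fairness inequalities required only for rounds 1 and 2 exists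
if and only if a weakly fair schedule exists. -/
theorem ilp_fair_iff_fair_schedule
    (n m s : ℕ) (size : Fin s → ℕ) (hsize : ∀ k, size k = 3 ∨ size k = 4)
    (pq : Fin n → Fin 3 → Fin m) (hpq : ∀ i, Function.Injective (pq i)) :
    ((∃ x : Fin n → Fin 3 → Fin s → Fin 3 → ℕ,
      (∀ i j k q, x i j k q = 0 ∨ x i j k q = 1) ∧
      (∀ (i : Fin n) (q : Fin 3), ∑ j : Fin 3, ∑ k : Fin s, x i j k q = 1) ∧
      (∀ (i : Fin n) (j : Fin 3), ∑ k : Fin s, ∑ q : Fin 3, x i j k q = 1) ∧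
      (∀ (j : Fin 3) (k : Fin s), ∑ i : Fin n, ∑ q : Fin 3, x i j k q = size k) ∧
      (∀ (j : Fin 3) (k : Fin s) (ℓ : Fin m),
        ∑ i : Fin n, ∑ q : Fin 3, (if pq i q = ℓ then x i j k q else 0) ≤ 1) ∧
      (∀ (j : Fin 3) (k : Fin s) (q : Fin 3) (i α : Fin n), i ≠ α →
        x i j k q + (∑ w : Fin 3, x α j k w) +
          (if pq i q ∈ ({pq α 0, pq α 1, pq α 2} : Finset (Fin m)) then 1 else 0) ≤ 2))
    ↔
    (∃ (π : Fin 3 → Fin n → Fin m) (φ : Fin 3 → Fin n → Fin s),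
      (∀ i : Fin n, ({π 0 i, π 1 i, π 2 i} : Finset (Fin m))
        = {pq i 0, pq i 1, pq i 2}) ∧
      (∀ (j : Fin 3) (i i' : Fin n), i ≠ i' → φ j i = φ j i' → π j i ≠ π j i') ∧
      (∀ (j : Fin 3) (k : Fin s),
        (Finset.univ.filter (fun i => φ j i = k)).card = size k) ∧
      (∀ (j : Fin 3) (i i' : Fin n), i ≠ i' → φ j i = φ j i' →
        π j i ∉ ({pq i' 0, pq i' 1, pq i' 2} : Finset (Fin m)))))
    ∧
    ((∃ x : Fin n → Fin 3 → Fin s → Fin 3 → ℕ,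
      (∀ i j k q, x i j k q = 0 ∨ x i j k q = 1) ∧
      (∀ (i : Fin n) (q : Fin 3), ∑ j : Fin 3, ∑ k : Fin s, x i j k q = 1) ∧
      (∀ (i : Fin n) (j : Fin 3), ∑ k : Fin s, ∑ q : Fin 3, x i j k q = 1) ∧
      (∀ (j : Fin 3) (k : Fin s), ∑ i : Fin n, ∑ q : Fin 3, x i j k q = size k) ∧
      (∀ (j : Fin 3) (k : Fin s) (ℓ : Fin m),
        ∑ i : Fin n, ∑ q : Fin 3, (if pq i q = ℓ then x i j k q else 0) ≤ 1) ∧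
      (∀ j : Fin 3, (j = 0 ∨ j = 1) → ∀ (k : Fin s) (q : Fin 3) (i α : Fin n), i ≠ α →
        x i j k q + (∑ w : Fin 3, x α j k w) +
          (if pq i q ∈ ({pq α 0, pq α 1, pq α 2} : Finset (Fin m)) then 1 else 0) ≤ 2))
    ↔
    (∃ (π : Fin 3 → Fin n → Fin m) (φ : Fin 3 → Fin n → Fin s),
      (∀ i : Fin n, ({π 0 i, π 1 i, π 2 i} : Finset (Fin m))
        = {pq i 0, pq i 1, pq i 2}) ∧
      (∀ (j : Fin 3) (i i' : Fin n), i ≠ i' → φ j i = φ j i' → π j i ≠ π j i') ∧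
      (∀ (j : Fin 3) (k : Fin s),
        (Finset.univ.filter (fun i => φ j i = k)).card = size k) ∧
      (∀ j : Fin 3, (j = 0 ∨ j = 1) → ∀ i i' : Fin n, i ≠ i' → φ j i = φ j i' →
        π j i ∉ ({pq i' 0, pq i' 1, pq i' 2} : Finset (Fin m))))) :=
  ilp_fair_iff_fair_schedule_general n m s size pq hpq
end

section
/- Let T be a finite set of n ≥ 4 teams, each team t ∈ T having a portfolio P(t) ⊆ P with |P(t)| = 3, and suppose that every problem p ∈ P is avoided by at least one team. Then T contains a fine set: a 4-element subset S ⊆ T such that every problem p ∈ P belongs to the portfolios of at most 3 teams of S. -/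
/-!
Fix a team `t`. Choosing, for each of its three problems, one team avoiding it gives at most four
teams which together avoid every problem: a problem outside `P(t)` is avoided by `t` itself. Any
four teams containing them form a fine set, since each problem misses one of them.
-/

lemma exists_card_le_forall_exists_not_mem {T P : Type*} [DecidableEq T]
    (Pf : T → Finset P) (t : T) (havoid : ∀ p : P, ∃ u : T, p ∉ Pf u) :
    ∃ B : Finset T, B.card ≤ (Pf t).card + 1 ∧ ∀ p : P, ∃ u ∈ B, p ∉ Pf u := by
  choose f hf using havoid
  refine ⟨insert t ((Pf t).image f), ?_, fun p => ?_⟩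
  · calc (insert t ((Pf t).image f)).card ≤ ((Pf t).image f).card + 1 :=
          Finset.card_insert_le _ _
      _ ≤ (Pf t).card + 1 := by gcongr; exact Finset.card_image_le
  · by_cases hp : p ∈ Pf t
    · exact ⟨f p, Finset.mem_insert_of_mem (Finset.mem_image_of_mem f hp), hf p⟩
    · exact ⟨t, Finset.mem_insert_self _ _, hp⟩

/-- If there are at least 4 teams, each with a portfolio of exactly 3 problems, and every
problem is avoided by at least one team, then there is a fine set: a 4-element set `S` of
teams such that every problem belongs to the portfolios of at most 3 teams of `S`. -/
theorem exists_fine_set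
    {T P : Type*} [Fintype T] [DecidableEq T] [DecidableEq P]
    (Pf : T → Finset P) (hPf : ∀ t, (Pf t).card = 3)
    (hn : 4 ≤ Fintype.card T)
    (havoid : ∀ p : P, ∃ t : T, p ∉ Pf t) :
    ∃ S : Finset T, S.card = 4 ∧
      ∀ p : P, (S.filter (fun t => p ∈ Pf t)).card ≤ 3 := by
  obtain ⟨t⟩ : Nonempty T := Fintype.card_pos_iff.mp (by omega)
  obtain ⟨B, hBcard, hB⟩ := exists_card_le_forall_exists_not_mem Pf t havoid
  obtain ⟨S, hBS, hScard⟩ := Finset.exists_superset_card_eq (hBcard.trans_eq (by rw [hPf])) hn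
  refine ⟨S, hScard, fun p => ?_⟩
  obtain ⟨u, huB, hu⟩ := hB p
  have hlt : (S.filter (fun t => p ∈ Pf t)).card < S.card :=
    Finset.card_lt_card (Finset.filter_ssubset.mpr ⟨u, hBS huB, hu⟩)
  omega
end
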